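/- arXiv:2109.04368 — 3 statements merged into one kernel-verified Lean document; each statement's English description precedes it below -/
import Mathlib

section
/- Let 𝓡 be a finite set of axis-aligned rectangles, each containing at least one point of P. Suppose S ⊆ 𝓡 is independent and has maximum weight among all independent subsets of 𝓡, i.e. W(S) ≥ W(S') for every independent S' ⊆ 𝓡. Then (1) S covers the maximum number of points of P among all independent subsets of 𝓡, i.e. |P_S| ≥ |P_{S'}| for every independent S' ⊆ 𝓡, and (2) S has minimum cardinality among all independent subsets S' ⊆ 𝓡 with |P_{S'}| = |P_S|. -/
noncomputable section
open scoped Classical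

/-- An axis-aligned rectangle: a closed box `Set.Icc a b` in `ℝ × ℝ`
(with respect to the coordinatewise order). -/
def IsRect (R : Set (ℝ × ℝ)) : Prop := ∃ a b : ℝ × ℝ, R = Set.Icc a b

/-- `cnt P R` = |R|, the number of points of `P` contained in `R`. -/
def cnt (P : Finset (ℝ × ℝ)) (R : Set (ℝ × ℝ)) : ℕ :=
  ((P : Set (ℝ × ℝ)) ∩ R).ncard

/-- `covered P S` = |P_S|, the number of points of `P` covered by some rectangle of `S`. -/
def covered (P : Finset (ℝ × ℝ)) (S : Finset (Set (ℝ × ℝ))) : ℕ :=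
  ((P : Set (ℝ × ℝ)) ∩ ⋃ R ∈ S, R).ncard

/-- `weight P S` = W(S) = ∑_{R ∈ S} (2n·|R| − 1), where n = |P|. -/
def weight (P : Finset (ℝ × ℝ)) (S : Finset (Set (ℝ × ℝ))) : ℤ :=
  ∑ R ∈ S, (2 * (P.card : ℤ) * (cnt P R : ℤ) - 1)

/-- A family of rectangles is independent if its members are pairwise disjoint as sets. -/
def Indep (S : Finset (Set (ℝ × ℝ))) : Prop :=
  ∀ R ∈ S, ∀ R' ∈ S, R ≠ R' → Disjoint R R'

/-!
For an independent family `S` every covered point lies in exactly one rectangle, so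
`W(S) = 2n·|P_S| − |S|`. When each rectangle contains a point of `P`, `|S| ≤ |P_S| ≤ n`, so a
single extra covered point is worth `2n`, more than any difference in cardinality (at most `n`):
maximising `W` maximises `|P_S|` first and then minimises `|S|`.
-/

lemma cnt_eq_card_filter (P : Finset (ℝ × ℝ)) (R : Set (ℝ × ℝ)) :
    cnt P R = (P.filter (· ∈ R)).card := by
  rw [cnt, ← Set.ncard_coe_finset]
  congr 1
  ext p
  simp

lemma covered_eq_card_filter (P : Finset (ℝ × ℝ)) (S : Finset (Set (ℝ × ℝ))) :
    covered P S = (P.filter fun p => ∃ R ∈ S, p ∈ R).card := by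
  rw [covered, ← Set.ncard_coe_finset]
  congr 1
  ext p
  simp

lemma covered_le_card (P : Finset (ℝ × ℝ)) (S : Finset (Set (ℝ × ℝ))) :
    covered P S ≤ P.card := by
  rw [covered_eq_card_filter]
  exact Finset.card_filter_le _ _

lemma covered_eq_sum_cnt (P : Finset (ℝ × ℝ)) {S : Finset (Set (ℝ × ℝ))} (hS : Indep S) :
    covered P S = ∑ R ∈ S, cnt P R := by
  have hunion : P.filter (fun p => ∃ R ∈ S, p ∈ R) = S.biUnion fun R => P.filter (· ∈ R) := by
    ext p
    simp only [Finset.mem_filter, Finset.mem_biUnion]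
    tauto
  rw [covered_eq_card_filter, hunion, Finset.card_biUnion]
  · simp only [cnt_eq_card_filter]
  · intro R hR R' hR' hne
    simp only [Function.onFun, Finset.disjoint_left, Finset.mem_filter]
    exact fun p hp hp' => (hS R hR R' hR' hne).notMem_of_mem_left hp.2 hp'.2

lemma weight_eq_of_indep (P : Finset (ℝ × ℝ)) {S : Finset (Set (ℝ × ℝ))} (hS : Indep S) :
    weight P S = 2 * (P.card : ℤ) * covered P S - S.card := by
  rw [weight, covered_eq_sum_cnt P hS, Finset.sum_sub_distrib, ← Finset.mul_sum]
  simp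

lemma card_le_covered {P : Finset (ℝ × ℝ)} {S : Finset (Set (ℝ × ℝ))} (hS : Indep S)
    (hpt : ∀ R ∈ S, ∃ p ∈ P, p ∈ R) : S.card ≤ covered P S := by
  rw [covered_eq_sum_cnt P hS, Finset.card_eq_sum_ones]
  refine Finset.sum_le_sum fun R hR => ?_
  obtain ⟨p, hp, hpR⟩ := hpt R hR
  rw [cnt_eq_card_filter]
  exact Finset.card_pos.mpr ⟨p, Finset.mem_filter.mpr ⟨hp, hpR⟩⟩

lemma covered_le_of_weight_le {P : Finset (ℝ × ℝ)} {S S' : Finset (Set (ℝ × ℝ))}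
    (hS : Indep S) (hS' : Indep S') (hpt' : ∀ R ∈ S', ∃ p ∈ P, p ∈ R)
    (hw : weight P S' ≤ weight P S) : covered P S' ≤ covered P S := by
  have hk' : (S'.card : ℤ) ≤ covered P S' := by exact_mod_cast card_le_covered hS' hpt'
  have hc' : (covered P S' : ℤ) ≤ P.card := by exact_mod_cast covered_le_card P S'
  rw [weight_eq_of_indep P hS, weight_eq_of_indep P hS'] at hw
  by_contra! hlt
  have hlt' : (covered P S : ℤ) + 1 ≤ covered P S' := by exact_mod_cast hlt
  have := mul_le_mul_of_nonneg_left hlt' (by positivity : (0 : ℤ) ≤ 2 * P.card)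
  linarith

lemma card_le_of_weight_le_of_covered_eq {P : Finset (ℝ × ℝ)} {S S' : Finset (Set (ℝ × ℝ))}
    (hS : Indep S) (hS' : Indep S') (hw : weight P S' ≤ weight P S)
    (hcov : covered P S' = covered P S) : S.card ≤ S'.card := by
  rw [weight_eq_of_indep P hS, weight_eq_of_indep P hS', hcov] at hw
  omega

theorem stmt_5_general (P : Finset (ℝ × ℝ)) (𝓡 : Finset (Set (ℝ × ℝ)))
    (hpt : ∀ R ∈ 𝓡, ∃ p ∈ P, p ∈ R)
    (S : Finset (Set (ℝ × ℝ))) (hind : Indep S)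
    (hmaxw : ∀ S' ⊆ 𝓡, Indep S' → weight P S' ≤ weight P S) :
    (∀ S' ⊆ 𝓡, Indep S' → covered P S' ≤ covered P S) ∧
    (∀ S' ⊆ 𝓡, Indep S' → covered P S' = covered P S → S.card ≤ S'.card) :=
  ⟨fun S' hS' hind' =>
      covered_le_of_weight_le hind hind' (fun R hR => hpt R (hS' hR)) (hmaxw S' hS' hind'),
    fun S' hS' hind' =>
      card_le_of_weight_le_of_covered_eq hind hind' (hmaxw S' hS' hind')⟩

/-- If `S` ⊆ 𝓡 is independent and has maximum weight among all independent
subsets of 𝓡, then (1) `S` covers the maximum number of points of `P` among all independent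
subsets of 𝓡, and (2) `S` has minimum cardinality among all independent subsets `S'` ⊆ 𝓡
with |P_{S'}| = |P_S|. -/
theorem stmt_5 (P : Finset (ℝ × ℝ)) (𝓡 : Finset (Set (ℝ × ℝ)))
    (hrect : ∀ R ∈ 𝓡, IsRect R) (hpt : ∀ R ∈ 𝓡, ∃ p ∈ P, p ∈ R)
    (S : Finset (Set (ℝ × ℝ))) (hsub : S ⊆ 𝓡) (hind : Indep S)
    (hmaxw : ∀ S' ⊆ 𝓡, Indep S' → weight P S' ≤ weight P S) :
    (∀ S' ⊆ 𝓡, Indep S' → covered P S' ≤ covered P S) ∧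
    (∀ S' ⊆ 𝓡, Indep S' → covered P S' = covered P S → S.card ≤ S'.card) :=
  stmt_5_general P 𝓡 hpt S hind hmaxw
end
end

section
/- Let P be nonempty and let 𝓡 be a finite set of axis-aligned rectangles, each containing at least one point of P. If a truth assignment α : 𝓡 → Bool maximizes the total satisfied weight W_SAT over all truth assignments on 𝓡, then α satisfies every intersection clause; that is, for every pair of distinct rectangles R, R' ∈ 𝓡 with R ∩ R' ≠ ∅, not both α(R) and α(R') are true. In particular the set S_α = {R ∈ 𝓡 : α(R) = true} is pairwise disjoint. -/
noncomputable section
open scoped Classical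

/-- `wsat P 𝓡 α` = W_SAT(α): the total weight of clauses satisfied by the truth
assignment `α`. The first sum is over the satisfied rectangle clauses (weight
2n·|R| − 1 each). The second sum ranges over *ordered* pairs of distinct rectangles
`(R, R')` of 𝓡 with `R ∩ R' ≠ ∅` for which not both `α R` and `α R'` are true,
each contributing `|𝓡|·n²`; since every such unordered intersection clause is counted
by exactly two ordered pairs, this equals the sum of `2·|𝓡|·n²` over the satisfied
unordered intersection clauses. -/
def wsat (P : Finset (ℝ × ℝ)) (𝓡 : Finset (Set (ℝ × ℝ)))
    (α : Set (ℝ × ℝ) → Bool) : ℤ :=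
  (∑ R ∈ 𝓡.filter (fun R => α R = true), (2 * (P.card : ℤ) * (cnt P R : ℤ) - 1)) +
  ∑ _q ∈ 𝓡.offDiag.filter
      (fun q => (q.1 ∩ q.2).Nonempty ∧ ¬(α q.1 = true ∧ α q.2 = true)),
    (𝓡.card : ℤ) * (P.card : ℤ) ^ 2

/-- If `P` is nonempty, every rectangle of 𝓡 contains a point of `P`, and
`α` maximizes W_SAT over all truth assignments on 𝓡, then `α` satisfies every
intersection clause; in particular `S_α = {R ∈ 𝓡 : α R = true}` is pairwise disjoint. -/
theorem stmt_8 (P : Finset (ℝ × ℝ)) (hP : P.Nonempty)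
    (𝓡 : Finset (Set (ℝ × ℝ)))
    (hrect : ∀ R ∈ 𝓡, IsRect R) (hpt : ∀ R ∈ 𝓡, ∃ p ∈ P, p ∈ R)
    (α : Set (ℝ × ℝ) → Bool)
    (hmax : ∀ β : Set (ℝ × ℝ) → Bool, wsat P 𝓡 β ≤ wsat P 𝓡 α) :
    (∀ R ∈ 𝓡, ∀ R' ∈ 𝓡, R ≠ R' → (R ∩ R').Nonempty →
        ¬(α R = true ∧ α R' = true)) ∧
    Indep (𝓡.filter (fun R => α R = true)) := by
  have key : ∀ R ∈ 𝓡, ∀ R' ∈ 𝓡, R ≠ R' → (R ∩ R').Nonempty →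
      ¬(α R = true ∧ α R' = true) := by
    rintro R hR R' hR' hne hint ⟨haR, haR'⟩
    set β : Set (ℝ × ℝ) → Bool := fun X => if X = R then false else α X with hβdef
    have hβ : ∀ X, β X = true ↔ (X ≠ R ∧ α X = true) := by
      intro X
      by_cases h : X = R <;> simp [hβdef, h]
    -- first sum
    have hfilt : 𝓡.filter (fun X => β X = true)
        = (𝓡.filter (fun X => α X = true)).erase R := by
      ext X
      simp only [Finset.mem_filter, Finset.mem_erase, hβ]
      tauto
    have hRmem : R ∈ 𝓡.filter (fun X => α X = true) := by
      simp [hR, haR]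
    have hsum1 : (∑ X ∈ 𝓡.filter (fun X => β X = true),
          (2 * (P.card : ℤ) * (cnt P X : ℤ) - 1))
        = (∑ X ∈ 𝓡.filter (fun X => α X = true),
          (2 * (P.card : ℤ) * (cnt P X : ℤ) - 1))
          - (2 * (P.card : ℤ) * (cnt P R : ℤ) - 1) := by
      rw [hfilt, Finset.sum_erase_eq_sub hRmem]
    -- second sum
    set Fα := 𝓡.offDiag.filter
      (fun q => (q.1 ∩ q.2).Nonempty ∧ ¬(α q.1 = true ∧ α q.2 = true)) with hFα
    set Fβ := 𝓡.offDiag.filter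
      (fun q => (q.1 ∩ q.2).Nonempty ∧ ¬(β q.1 = true ∧ β q.2 = true)) with hFβ
    have hsub : insert (R, R') (insert (R', R) Fα) ⊆ Fβ := by
      intro q hq
      simp only [Finset.mem_insert] at hq
      rcases hq with rfl | rfl | hq
      · simp only [hFβ, Finset.mem_filter, Finset.mem_offDiag]
        refine ⟨⟨hR, hR', hne⟩, hint, ?_⟩
        rintro ⟨h1, -⟩
        exact ((hβ R).mp h1).1 rfl
      · simp only [hFβ, Finset.mem_filter, Finset.mem_offDiag]
        refine ⟨⟨hR', hR, hne.symm⟩, ?_, ?_⟩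
        · obtain ⟨x, hx1, hx2⟩ := hint; exact ⟨x, hx2, hx1⟩
        · rintro ⟨-, h2⟩
          exact ((hβ R).mp h2).1 rfl
      · simp only [hFα, Finset.mem_filter] at hq
        simp only [hFβ, Finset.mem_filter]
        refine ⟨hq.1, hq.2.1, ?_⟩
        rintro ⟨h1, h2⟩
        exact hq.2.2 ⟨((hβ _).mp h1).2, ((hβ _).mp h2).2⟩
    have hnot1 : (R, R') ∉ Fα := by
      simp only [hFα, Finset.mem_filter]
      rintro ⟨-, -, h⟩; exact h ⟨haR, haR'⟩
    have hnot2 : (R', R) ∉ insert (R, R') Fα := by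
      simp only [Finset.mem_insert, hFα, Finset.mem_filter]
      rintro (h | ⟨-, -, h⟩)
      · exact hne (congrArg Prod.snd h)
      · exact h ⟨haR', haR⟩
    have hnot1' : (R, R') ∉ insert (R', R) Fα := by
      simp only [Finset.mem_insert]
      rintro (h | h)
      · exact hne (congrArg Prod.fst h)
      · exact hnot1 h
    have hnot2' : (R', R) ∉ Fα := by
      simp only [hFα, Finset.mem_filter]
      rintro ⟨-, -, h⟩; exact h ⟨haR', haR⟩
    have hcard : Fα.card + 2 ≤ Fβ.card := by
      have h1 : (insert (R, R') (insert (R', R) Fα)).card = Fα.card + 2 := by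
        rw [Finset.card_insert_of_notMem hnot1',
          Finset.card_insert_of_notMem hnot2']
      calc Fα.card + 2 = _ := h1.symm
        _ ≤ Fβ.card := Finset.card_le_card hsub
    -- constants
    set c : ℤ := (𝓡.card : ℤ) * (P.card : ℤ) ^ 2 with hc
    have hc0 : 0 ≤ c := by positivity
    have hwα : wsat P 𝓡 α = (∑ X ∈ 𝓡.filter (fun X => α X = true),
          (2 * (P.card : ℤ) * (cnt P X : ℤ) - 1)) + Fα.card * c := by
      rw [wsat, ← hFα, Finset.sum_const, nsmul_eq_mul]
    have hwβ : wsat P 𝓡 β = (∑ X ∈ 𝓡.filter (fun X => α X = true),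
          (2 * (P.card : ℤ) * (cnt P X : ℤ) - 1))
          - (2 * (P.card : ℤ) * (cnt P R : ℤ) - 1) + Fβ.card * c := by
      rw [wsat, ← hFβ, Finset.sum_const, nsmul_eq_mul, hsum1]
    have hineq := hmax β
    rw [hwα, hwβ] at hineq
    -- so Fβ.card * c ≤ Fα.card * c + (2n cnt R - 1)
    have h2c : 2 * c ≤ 2 * (P.card : ℤ) * (cnt P R : ℤ) - 1 := by
      have : ((Fα.card : ℤ) + 2) * c ≤ (Fβ.card : ℤ) * c := by
        apply mul_le_mul_of_nonneg_right _ hc0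
        exact_mod_cast hcard
      linarith
    -- but 2c ≥ 4 n² ≥ 2 n cnt R
    have hcnt_le : (cnt P R : ℤ) ≤ (P.card : ℤ) := by
      have : cnt P R ≤ P.card := by
        rw [cnt, ← Set.ncard_coe_finset P]
        exact Set.ncard_le_ncard Set.inter_subset_left (P.finite_toSet)
      exact_mod_cast this
    have hn1 : (1 : ℤ) ≤ (P.card : ℤ) := by
      exact_mod_cast Finset.card_pos.mpr hP
    have hRcard : (2 : ℤ) ≤ (𝓡.card : ℤ) := by
      have : 1 < 𝓡.card := Finset.one_lt_card.mpr ⟨R, hR, R', hR', hne⟩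
      exact_mod_cast this
    have : 2 * (P.card : ℤ) * (cnt P R : ℤ) ≤ 2 * (P.card : ℤ) * (P.card : ℤ) :=
      by nlinarith
    nlinarith [sq_nonneg ((P.card : ℤ))]
  refine ⟨key, ?_⟩
  intro R hR R' hR' hne
  simp only [Finset.mem_filter] at hR hR'
  rw [Set.disjoint_iff_inter_eq_empty]
  by_contra h
  exact key R hR.1 R' hR'.1 hne (Set.nonempty_iff_ne_empty.mpr h) ⟨hR.2, hR'.2⟩
end
end

section
/- Let P be nonempty and let 𝓡 be a finite set of axis-aligned rectangles, each containing at least one point of P. A truth assignment α : 𝓡 → Bool maximizes the total satisfied weight W_SAT over all truth assignments on 𝓡 if and only if the set S_α = {R ∈ 𝓡 : α(R) = true} is pairwise disjoint and has maximum weight W among all pairwise disjoint subsets of 𝓡 (i.e., W(S_α) ≥ W(S) for every independent S ⊆ 𝓡). -/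
noncomputable section
open scoped Classical

private lemma cnt_le_card (P : Finset (ℝ × ℝ)) (R : Set (ℝ × ℝ)) : cnt P R ≤ P.card := by
  have h : ((P : Set (ℝ × ℝ)) ∩ R).ncard ≤ (P : Set (ℝ × ℝ)).ncard :=
    Set.ncard_le_ncard Set.inter_subset_left P.finite_toSet
  simpa [cnt, Set.ncard_coe_finset] using h

/-- The set of ordered intersecting pairs. -/
private def Tset (𝓡 : Finset (Set (ℝ × ℝ))) : Finset (Set (ℝ × ℝ) × Set (ℝ × ℝ)) :=
  𝓡.offDiag.filter (fun q => (q.1 ∩ q.2).Nonempty)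

/-- The set of ordered intersecting pairs with both rectangles selected. -/
private def Vset (𝓡 : Finset (Set (ℝ × ℝ))) (α : Set (ℝ × ℝ) → Bool) :
    Finset (Set (ℝ × ℝ) × Set (ℝ × ℝ)) :=
  𝓡.offDiag.filter (fun q => (q.1 ∩ q.2).Nonempty ∧ (α q.1 = true ∧ α q.2 = true))

private lemma wsat_eq (P : Finset (ℝ × ℝ)) (𝓡 : Finset (Set (ℝ × ℝ)))
    (α : Set (ℝ × ℝ) → Bool) :
    wsat P 𝓡 α = weight P (𝓡.filter (fun R => α R = true)) +
      (((Tset 𝓡).card : ℤ) - ((Vset 𝓡 α).card : ℤ)) * ((𝓡.card : ℤ) * (P.card : ℤ) ^ 2) := by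
  have h1 : 𝓡.offDiag.filter
      (fun q => (q.1 ∩ q.2).Nonempty ∧ ¬(α q.1 = true ∧ α q.2 = true))
      = (Tset 𝓡).filter (fun q => ¬(α q.1 = true ∧ α q.2 = true)) := by
    simp [Tset, Finset.filter_filter]
  have h2 : Vset 𝓡 α = (Tset 𝓡).filter (fun q => (α q.1 = true ∧ α q.2 = true)) := by
    simp [Tset, Vset, Finset.filter_filter]
  have h3 : ((Tset 𝓡).filter (fun q => (α q.1 = true ∧ α q.2 = true))).card +
      ((Tset 𝓡).filter (fun q => ¬(α q.1 = true ∧ α q.2 = true))).card = (Tset 𝓡).card :=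
    Finset.card_filter_add_card_filter_not _
  have h4 : (((Tset 𝓡).filter (fun q => ¬(α q.1 = true ∧ α q.2 = true))).card : ℤ)
      = ((Tset 𝓡).card : ℤ) - ((Vset 𝓡 α).card : ℤ) := by
    rw [h2]; omega
  rw [wsat, weight, h1, Finset.sum_const, nsmul_eq_mul, h4]

private lemma weight_le (P : Finset (ℝ × ℝ)) {S 𝓡 : Finset (Set (ℝ × ℝ))} (hS : S ⊆ 𝓡) :
    weight P S ≤ (𝓡.card : ℤ) * (2 * (P.card : ℤ) ^ 2) - (S.card : ℤ) := by
  have h1 : weight P S ≤ ∑ _R ∈ S, (2 * (P.card : ℤ) ^ 2 - 1) := by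
    apply Finset.sum_le_sum
    intro R _
    have h : (cnt P R : ℤ) ≤ (P.card : ℤ) := by exact_mod_cast cnt_le_card P R
    have h0 : (0 : ℤ) ≤ (cnt P R : ℤ) := Int.natCast_nonneg _
    nlinarith [Int.natCast_nonneg P.card]
  have h2 : (∑ _R ∈ S, (2 * (P.card : ℤ) ^ 2 - 1))
      = (S.card : ℤ) * (2 * (P.card : ℤ) ^ 2) - (S.card : ℤ) := by
    rw [Finset.sum_const, nsmul_eq_mul]; ring
  have h3 : (S.card : ℤ) ≤ (𝓡.card : ℤ) := by exact_mod_cast Finset.card_le_card hS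
  have h4 : (0:ℤ) ≤ 2 * (P.card : ℤ) ^ 2 := by positivity
  nlinarith

private lemma indep_of_Vset_empty {𝓡 : Finset (Set (ℝ × ℝ))} {α : Set (ℝ × ℝ) → Bool}
    (h : Vset 𝓡 α = ∅) : Indep (𝓡.filter (fun R => α R = true)) := by
  intro R hR R' hR' hne
  by_contra hdis
  have hNE : (R ∩ R').Nonempty := Set.not_disjoint_iff_nonempty_inter.mp hdis
  simp only [Finset.mem_filter] at hR hR'
  have hmem : (R, R') ∈ Vset 𝓡 α := by
    simp only [Vset, Finset.mem_filter, Finset.mem_offDiag]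
    exact ⟨⟨hR.1, hR'.1, hne⟩, hNE, hR.2, hR'.2⟩
  rw [h] at hmem
  exact absurd hmem (Finset.notMem_empty _)

private lemma Vset_empty_of_indep {𝓡 : Finset (Set (ℝ × ℝ))} {α : Set (ℝ × ℝ) → Bool}
    (h : Indep (𝓡.filter (fun R => α R = true))) : Vset 𝓡 α = ∅ := by
  rw [Finset.eq_empty_iff_forall_notMem]
  intro q hq
  simp only [Vset, Finset.mem_filter, Finset.mem_offDiag] at hq
  obtain ⟨⟨h1, h2, h3⟩, hNE, ha1, ha2⟩ := hq
  have := h q.1 (Finset.mem_filter.2 ⟨h1, ha1⟩) q.2 (Finset.mem_filter.2 ⟨h2, ha2⟩) h3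
  rw [Set.disjoint_iff_inter_eq_empty] at this
  rw [this] at hNE
  exact Set.not_nonempty_empty hNE

/-- If `P` is nonempty and every rectangle of 𝓡 contains a point of `P`,
then `α` maximizes W_SAT over all truth assignments on 𝓡 iff
`S_α = {R ∈ 𝓡 : α R = true}` is pairwise disjoint and has maximum weight W among all
pairwise disjoint subsets of 𝓡. -/
theorem stmt_9 (P : Finset (ℝ × ℝ)) (hP : P.Nonempty)
    (𝓡 : Finset (Set (ℝ × ℝ)))
    (hrect : ∀ R ∈ 𝓡, IsRect R) (hpt : ∀ R ∈ 𝓡, ∃ p ∈ P, p ∈ R)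
    (α : Set (ℝ × ℝ) → Bool) :
    (∀ β : Set (ℝ × ℝ) → Bool, wsat P 𝓡 β ≤ wsat P 𝓡 α) ↔
      (Indep (𝓡.filter (fun R => α R = true)) ∧
       ∀ S ⊆ 𝓡, Indep S →
         weight P S ≤ weight P (𝓡.filter (fun R => α R = true))) := by
  have hn1 : (1 : ℤ) ≤ (P.card : ℤ) := by exact_mod_cast Finset.card_pos.2 hP
  constructor
  · intro hmax
    have hind : Indep (𝓡.filter (fun R => α R = true)) := by
      intro R hR R' hR' hne
      by_contra hdis
      have hNE : (R ∩ R').Nonempty := Set.not_disjoint_iff_nonempty_inter.mp hdis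
      simp only [Finset.mem_filter] at hR hR'
      set β : Set (ℝ × ℝ) → Bool := fun X => if X = R then false else α X with hβ
      have hfil : 𝓡.filter (fun X => β X = true)
          = (𝓡.filter (fun X => α X = true)).erase R := by
        ext x
        by_cases hx : x = R <;>
          simp [hβ, hx, Finset.mem_erase, and_comm]
      have hRmem : R ∈ 𝓡.filter (fun X => α X = true) := Finset.mem_filter.2 ⟨hR.1, hR.2⟩
      have hw : weight P (𝓡.filter (fun X => β X = true))
          = weight P (𝓡.filter (fun X => α X = true))
            - (2 * (P.card : ℤ) * (cnt P R : ℤ) - 1) := by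
        rw [hfil, weight, weight, Finset.sum_erase_eq_sub hRmem]
      have hp1 : (R, R') ∈ Vset 𝓡 α := by
        simp only [Vset, Finset.mem_filter, Finset.mem_offDiag]
        exact ⟨⟨hR.1, hR'.1, hne⟩, hNE, hR.2, hR'.2⟩
      have hp2 : (R', R) ∈ Vset 𝓡 α := by
        simp only [Vset, Finset.mem_filter, Finset.mem_offDiag]
        exact ⟨⟨hR'.1, hR.1, hne.symm⟩, by rwa [Set.inter_comm], hR'.2, hR.2⟩
      have hpair_ne : ((R : Set (ℝ × ℝ)), R') ≠ (R', R) := by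
        intro hcon
        exact hne (congrArg Prod.fst hcon)
      have hsub : Vset 𝓡 β ⊆ ((Vset 𝓡 α).erase (R', R)).erase (R, R') := by
        intro q hq
        have hqm : q ∈ 𝓡.offDiag ∧ ((q.1 ∩ q.2).Nonempty ∧ (β q.1 = true ∧ β q.2 = true)) :=
          Finset.mem_filter.1 hq
        obtain ⟨hqd, hqNE, hb1, hb2⟩ := hqm
        have hq1R : q.1 ≠ R := by intro hc; rw [hβ] at hb1; simp [hc] at hb1
        have hq2R : q.2 ≠ R := by intro hc; rw [hβ] at hb2; simp [hc] at hb2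
        have ha1 : α q.1 = true := by rw [hβ] at hb1; simpa [hq1R] using hb1
        have ha2 : α q.2 = true := by rw [hβ] at hb2; simpa [hq2R] using hb2
        refine Finset.mem_erase.2 ⟨?_, Finset.mem_erase.2 ⟨?_, ?_⟩⟩
        · intro hc; exact hq1R (congrArg Prod.fst hc)
        · intro hc; exact hq2R (congrArg Prod.snd hc)
        · exact Finset.mem_filter.2 ⟨hqd, hqNE, ha1, ha2⟩
      have hmem2 : ((R : Set (ℝ × ℝ)), R') ∈ (Vset 𝓡 α).erase (R', R) :=
        Finset.mem_erase.2 ⟨hpair_ne, hp1⟩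
      have hcard : (Vset 𝓡 β).card + 2 ≤ (Vset 𝓡 α).card := by
        have h1 := Finset.card_le_card hsub
        have h2 := Finset.card_erase_of_mem hmem2
        have h3 := Finset.card_erase_of_mem hp2
        have h4 : 1 ≤ (Vset 𝓡 α).card := Finset.card_pos.2 ⟨_, hp2⟩
        have h5 : 1 ≤ ((Vset 𝓡 α).erase (R', R)).card := Finset.card_pos.2 ⟨_, hmem2⟩
        omega
      have hβle := hmax β
      rw [wsat_eq, wsat_eq, hw] at hβle
      have hcnt : (cnt P R : ℤ) ≤ (P.card : ℤ) := by exact_mod_cast cnt_le_card P R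
      have hcnt0 : (0:ℤ) ≤ (cnt P R : ℤ) := Int.natCast_nonneg _
      have hm1 : (1:ℤ) ≤ (𝓡.card : ℤ) := by exact_mod_cast Finset.card_pos.2 ⟨R, hR.1⟩
      have hVc : ((Vset 𝓡 β).card : ℤ) + 2 ≤ ((Vset 𝓡 α).card : ℤ) := by exact_mod_cast hcard
      have hK0 : (0:ℤ) ≤ (𝓡.card : ℤ) * (P.card : ℤ) ^ 2 := by positivity
      have key : (((Vset 𝓡 α).card : ℤ) - ((Vset 𝓡 β).card : ℤ))
          * ((𝓡.card : ℤ) * (P.card : ℤ) ^ 2) ≤ 2 * (P.card : ℤ) * (cnt P R : ℤ) - 1 := by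
        nlinarith [hβle]
      have h2K : 2 * ((𝓡.card : ℤ) * (P.card : ℤ) ^ 2)
          ≤ (((Vset 𝓡 α).card : ℤ) - ((Vset 𝓡 β).card : ℤ))
            * ((𝓡.card : ℤ) * (P.card : ℤ) ^ 2) := by
        have : (2:ℤ) ≤ ((Vset 𝓡 α).card : ℤ) - ((Vset 𝓡 β).card : ℤ) := by linarith
        exact mul_le_mul_of_nonneg_right this hK0
      nlinarith [key, h2K, hcnt, hcnt0, hn1, hm1]
    refine ⟨hind, ?_⟩
    intro S hS hSind
    set β : Set (ℝ × ℝ) → Bool := fun X => decide (X ∈ S) with hβ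
    have hfil : 𝓡.filter (fun X => β X = true) = S := by
      ext x
      simp only [hβ, Finset.mem_filter, decide_eq_true_eq]
      exact ⟨fun h => h.2, fun h => ⟨hS h, h⟩⟩
    have hVβ : Vset 𝓡 β = ∅ := by
      have : Indep (𝓡.filter (fun X => β X = true)) := by rw [hfil]; exact hSind
      exact Vset_empty_of_indep this
    have hVα : Vset 𝓡 α = ∅ := Vset_empty_of_indep hind
    have := hmax β
    rw [wsat_eq, wsat_eq, hfil, hVβ, hVα] at this
    simpa using this
  · rintro ⟨hind, hwmax⟩
    intro β
    have hVα : Vset 𝓡 α = ∅ := Vset_empty_of_indep hind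
    have hwα0 : 0 ≤ weight P (𝓡.filter (fun R => α R = true)) := by
      have := hwmax ∅ (Finset.empty_subset _)
        (by intro R hR; exact absurd hR (Finset.notMem_empty _))
      simpa [weight] using this
    rw [wsat_eq, wsat_eq, hVα]
    simp only [Finset.card_empty, Nat.cast_zero, sub_zero]
    by_cases hVβ : Vset 𝓡 β = ∅
    · rw [hVβ]
      have hsub : 𝓡.filter (fun X => β X = true) ⊆ 𝓡 := Finset.filter_subset _ _
      have hindβ : Indep (𝓡.filter (fun X => β X = true)) := indep_of_Vset_empty hVβ
      have := hwmax _ hsub hindβ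
      simpa using this
    · obtain ⟨q, hq⟩ := Finset.nonempty_iff_ne_empty.2 hVβ
      have hqm : q ∈ 𝓡.offDiag ∧ ((q.1 ∩ q.2).Nonempty ∧ (β q.1 = true ∧ β q.2 = true)) :=
        Finset.mem_filter.1 hq
      obtain ⟨hq1, hq2, hq12⟩ := Finset.mem_offDiag.1 hqm.1
      have hq' : (q.2, q.1) ∈ Vset 𝓡 β := by
        refine Finset.mem_filter.2 ⟨Finset.mem_offDiag.2 ⟨hq2, hq1, hq12.symm⟩, ?_, ?_, ?_⟩
        · rw [Set.inter_comm]; exact hqm.2.1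
        · exact hqm.2.2.2
        · exact hqm.2.2.1
      have hqne : q ≠ (q.2, q.1) := fun hc => hq12 (congrArg Prod.fst hc)
      have hcard2 : 2 ≤ (Vset 𝓡 β).card :=
        Finset.one_lt_card.2 ⟨q, hq, (q.2, q.1), hq', hqne⟩
      have hm1 : (1:ℤ) ≤ (𝓡.card : ℤ) := by exact_mod_cast Finset.card_pos.2 ⟨q.1, hq1⟩
      have hwβ : weight P (𝓡.filter (fun X => β X = true))
          ≤ (𝓡.card : ℤ) * (2 * (P.card : ℤ) ^ 2)
            - ((𝓡.filter (fun X => β X = true)).card : ℤ) :=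
        weight_le P (Finset.filter_subset _ _)
      have hV2 : (2:ℤ) ≤ ((Vset 𝓡 β).card : ℤ) := by exact_mod_cast hcard2
      have hK0 : (0:ℤ) ≤ (𝓡.card : ℤ) * (P.card : ℤ) ^ 2 := by positivity
      have h2K : 2 * ((𝓡.card : ℤ) * (P.card : ℤ) ^ 2)
          ≤ ((Vset 𝓡 β).card : ℤ) * ((𝓡.card : ℤ) * (P.card : ℤ) ^ 2) :=
        mul_le_mul_of_nonneg_right hV2 hK0
      have hc0 : (0:ℤ) ≤ ((𝓡.filter (fun X => β X = true)).card : ℤ) := Int.natCast_nonneg _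
      nlinarith [hwβ, hwα0, h2K, hm1, hn1, hc0]
end
end
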